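/- arXiv:2112.04210 — 8 statements merged into one kernel-verified Lean document; each statement's English description precedes it below -/
import Mathlib

section
/- For every integer d ≥ 0, neither U nor V divides φ_d in the polynomial ring A[U,V]. -/
open MvPolynomial

/-- The isobaric polynomials `φ_d ∈ A[U,V]` (with `A = 𝔽_q[T]`), defined by the recursion
`φ_0 = 1`, `φ_1 = U − T^q·V`, and
`φ_d = φ_{d−1}·(U − T^q·V)^{q^{d−1}} + (T^{q^{d−1}} − T)·φ_{d−2}·(U^q·V)^{q^{d−2}}` for `d ≥ 2`.
Here `U = X 0`, `V = X 1` and `T = Polynomial.X`. -/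
noncomputable def phiPoly (Fq : Type) [Field Fq] (q : ℕ) :
    ℕ → MvPolynomial (Fin 2) (Polynomial Fq)
  | 0 => 1
  | 1 => X 0 - C (Polynomial.X ^ q) * X 1
  | (d + 2) =>
      phiPoly Fq q (d + 1) * (X 0 - C (Polynomial.X ^ q) * X 1) ^ q ^ (d + 1) +
        C (Polynomial.X ^ (q ^ (d + 1)) - Polynomial.X) * phiPoly Fq q d *
          (X 0 ^ q * X 1) ^ q ^ d

lemma phiPoly_aeval0_ne_zero (Fq : Type) [Field Fq] (q : ℕ) (hq : q ≠ 0) :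
    ∀ d : ℕ, aeval (![0, X 1] : Fin 2 → MvPolynomial (Fin 2) (Polynomial Fq)) (phiPoly Fq q d) ≠ 0
  | 0 => by simp [phiPoly]
  | 1 => by
      simp only [phiPoly, map_sub, map_mul, aeval_X, Matrix.cons_val_zero,
        Matrix.cons_val_one, Matrix.head_cons, aeval_C, zero_sub, neg_ne_zero]
      exact mul_ne_zero (by
        simpa using C_ne_zero.mpr (pow_ne_zero q Polynomial.X_ne_zero)) (X_ne_zero 1)
  | (d + 2) => by
      have ih := phiPoly_aeval0_ne_zero Fq q hq (d + 1)
      simp only [phiPoly, map_add, map_mul, map_pow, map_sub, aeval_X,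
        Matrix.cons_val_zero, Matrix.cons_val_one, Matrix.head_cons, aeval_C,
        zero_pow hq, zero_mul, zero_pow (pow_ne_zero d hq), mul_zero, add_zero,
        zero_sub]
      refine mul_ne_zero ih (pow_ne_zero _ (neg_ne_zero.mpr (mul_ne_zero ?_ (X_ne_zero 1))))
      simpa using C_ne_zero.mpr (pow_ne_zero q Polynomial.X_ne_zero)

lemma phiPoly_aeval1_ne_zero (Fq : Type) [Field Fq] (q : ℕ) (hq : q ≠ 0) :
    ∀ d : ℕ, aeval (![X 0, 0] : Fin 2 → MvPolynomial (Fin 2) (Polynomial Fq)) (phiPoly Fq q d) ≠ 0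
  | 0 => by simp [phiPoly]
  | 1 => by
      simp only [phiPoly, map_sub, map_mul, aeval_X, Matrix.cons_val_zero,
        Matrix.cons_val_one, Matrix.head_cons, aeval_C, mul_zero, sub_zero]
      exact X_ne_zero 0
  | (d + 2) => by
      have ih := phiPoly_aeval1_ne_zero Fq q hq (d + 1)
      simp only [phiPoly, map_add, map_mul, map_pow, map_sub, aeval_X,
        Matrix.cons_val_zero, Matrix.cons_val_one, Matrix.head_cons, aeval_C,
        mul_zero, sub_zero, zero_pow (pow_ne_zero d hq), add_zero]
      exact mul_ne_zero ih (pow_ne_zero _ (X_ne_zero 0))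

/-- For every integer `d ≥ 0`, neither `U` nor `V` divides `φ_d` in `A[U,V]`. -/
theorem X_not_dvd_phiPoly (p r q : ℕ) (hp : p.Prime) (hodd : Odd p) (hr : 0 < r)
    (hq : q = p ^ r) (Fq : Type) [Field Fq] [Fintype Fq] (hcard : Fintype.card Fq = q)
    (d : ℕ) :
    ¬ (X 0 ∣ phiPoly Fq q d) ∧ ¬ (X 1 ∣ phiPoly Fq q d) := by
  have hq0 : q ≠ 0 := by
    subst hq; exact pow_ne_zero r hp.pos.ne'
  constructor
  · rintro ⟨c, hc⟩
    apply phiPoly_aeval0_ne_zero Fq q hq0 d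
    rw [hc, map_mul]
    simp
  · rintro ⟨c, hc⟩
    apply phiPoly_aeval1_ne_zero Fq q hq0 d
    rw [hc, map_mul]
    simp
end

section
/- For every integer d ≥ 0, neither U nor V divides φ̄_d in the polynomial ring 𝔽_𝔭[U,V]. -/
open MvPolynomial

set_option maxHeartbeats 2000000 in
set_option synthInstance.maxHeartbeats 400000 in
/-- Let `π ∈ A = 𝔽_q[T]` be monic irreducible with `π ≠ T`, `𝔭 = (π)`, `𝔽_𝔭 = A/𝔭`, and let
`φ̄_d` be the coefficientwise reduction of `φ_d` modulo `𝔭`.  For every `d ≥ 0`, neither `U`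
nor `V` divides `φ̄_d` in `𝔽_𝔭[U,V]`. -/
theorem X_not_dvd_phiPoly_mod (p r q : ℕ) (hp : p.Prime) (hodd : Odd p) (hr : 0 < r)
    (hq : q = p ^ r) (Fq : Type) [Field Fq] [Fintype Fq] (hcard : Fintype.card Fq = q)
    (π : Polynomial Fq) (hmonic : π.Monic) (hirr : Irreducible π)
    (hne : π ≠ Polynomial.X) (d : ℕ) :
    ¬ (X 0 ∣ MvPolynomial.map (Ideal.Quotient.mk (Ideal.span {π})) (phiPoly Fq q d)) ∧
      ¬ (X 1 ∣ MvPolynomial.map (Ideal.Quotient.mk (Ideal.span {π})) (phiPoly Fq q d)) := by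
  have hq0 : q ≠ 0 := by
    rw [hq]; exact (pow_pos hp.pos r).ne'
  haveI : (Ideal.span {π}).IsMaximal := PrincipalIdealRing.isMaximal_of_irreducible hirr
  haveI : (Ideal.span {π}).IsPrime := Ideal.IsMaximal.isPrime ‹_›
  set mk : Polynomial Fq →+* Polynomial Fq ⧸ Ideal.span {π} :=
    Ideal.Quotient.mk (Ideal.span {π}) with hmk
  have hX : mk Polynomial.X ≠ 0 := by
    intro h
    rw [hmk, Ideal.Quotient.eq_zero_iff_mem, Ideal.mem_span_singleton] at h
    exact hne (Polynomial.eq_of_monic_of_associated hmonic Polynomial.monic_X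
      (hirr.associated_of_dvd Polynomial.irreducible_X h))
  have main0 : ∀ n, (aeval ![(0 : Polynomial (Polynomial Fq ⧸ Ideal.span {π})), Polynomial.X])
      (MvPolynomial.map mk (phiPoly Fq q n)) ≠ 0 := by
    have hbase : ∀ m, (aeval ![(0 : Polynomial (Polynomial Fq ⧸ Ideal.span {π})), Polynomial.X])
        (MvPolynomial.map mk (phiPoly Fq q (m + 1))) ≠ 0 →
        (aeval ![(0 : Polynomial (Polynomial Fq ⧸ Ideal.span {π})), Polynomial.X])
        (MvPolynomial.map mk (phiPoly Fq q (m + 2))) ≠ 0 := by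
      intro m ih
      have : (aeval ![(0 : Polynomial (Polynomial Fq ⧸ Ideal.span {π})), Polynomial.X])
          (MvPolynomial.map mk (phiPoly Fq q (m + 2))) =
          (aeval ![(0 : Polynomial (Polynomial Fq ⧸ Ideal.span {π})), Polynomial.X])
          (MvPolynomial.map mk (phiPoly Fq q (m + 1))) *
          (-(Polynomial.C (mk Polynomial.X ^ q) * Polynomial.X)) ^ q ^ (m + 1) := by
        simp [phiPoly, zero_pow hq0, neg_mul, sub_eq_add_neg, map_pow]
        right
        exact fun h => absurd h hq0
      rw [this]
      exact mul_ne_zero ih (pow_ne_zero _ (by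
        simp only [neg_ne_zero]
        exact mul_ne_zero (by simpa using pow_ne_zero q hX) Polynomial.X_ne_zero))
    intro n
    induction n with
    | zero => simp [phiPoly]
    | succ m ih =>
      cases m with
      | zero =>
        simp only [phiPoly]
        simp [zero_pow hq0, neg_ne_zero]
        exact fun h => absurd h hX
      | succ k => exact hbase k ih
  have main1 : ∀ n, (aeval ![Polynomial.X, (0 : Polynomial (Polynomial Fq ⧸ Ideal.span {π}))])
      (MvPolynomial.map mk (phiPoly Fq q n)) ≠ 0 := by
    have hbase : ∀ m, (aeval ![Polynomial.X, (0 : Polynomial (Polynomial Fq ⧸ Ideal.span {π}))])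
        (MvPolynomial.map mk (phiPoly Fq q (m + 1))) ≠ 0 →
        (aeval ![Polynomial.X, (0 : Polynomial (Polynomial Fq ⧸ Ideal.span {π}))])
        (MvPolynomial.map mk (phiPoly Fq q (m + 2))) ≠ 0 := by
      intro m ih
      have : (aeval ![Polynomial.X, (0 : Polynomial (Polynomial Fq ⧸ Ideal.span {π}))])
          (MvPolynomial.map mk (phiPoly Fq q (m + 2))) =
          (aeval ![Polynomial.X, (0 : Polynomial (Polynomial Fq ⧸ Ideal.span {π}))])
          (MvPolynomial.map mk (phiPoly Fq q (m + 1))) *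
          Polynomial.X ^ q ^ (m + 1) := by
        simp [phiPoly, zero_pow (pow_ne_zero m hq0), map_pow]
      rw [this]
      exact mul_ne_zero ih (pow_ne_zero _ Polynomial.X_ne_zero)
    intro n
    induction n with
    | zero => simp [phiPoly]
    | succ m ih =>
      cases m with
      | zero =>
        simp only [phiPoly]
        simp [Polynomial.X_ne_zero]
      | succ k => exact hbase k ih
  constructor
  · rintro ⟨c, hc⟩
    apply main0 d
    have := congrArg (aeval ![(0 : Polynomial (Polynomial Fq ⧸ Ideal.span {π})), Polynomial.X]) hc
    simpa using this
  · rintro ⟨c, hc⟩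
    apply main1 d
    have := congrArg (aeval ![Polynomial.X, (0 : Polynomial (Polynomial Fq ⧸ Ideal.span {π}))]) hc
    simpa using this
end

section
/- With d = deg π, the polynomial φ̄_d is square-free in 𝔽_𝔭[U,V]. -/
/-!
Let `W_e = φ_{e+1} ∂_U φ_e − φ_e ∂_U φ_{e+1}` be the Casoratian of consecutive `φ`'s. Since
`∂_U` kills `q`-th powers in characteristic `p`, the recursion gives
`W_{e+1} = −(T^{q^{e+1}} − T) (U^q V)^{q^e} W_e`, so `W_e` is a constant
`∏_{0<j≤e} (T − T^{q^j})` times a monomial in `U` and `V`. Modulo `π` that constant is nonzero for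
`e < deg π`, because the Frobenius of `𝔽_𝔭 / 𝔽_q` has order `deg π`. Hence a repeated factor
of `φ̄_d`, which divides both `φ̄_d` and `∂_U φ̄_d`, divides `W_{d-1}` and is associated to `U` or
`V`. Both are excluded: `φ_d(1, 0) = 1`, and `φ_d(0, 1)` is a power of `−T^q`, a unit mod `π`
since `π ≠ T`.
-/

open MvPolynomial

namespace MvPolynomial

variable {R σ : Type*} [CommSemiring R]

theorem pderiv_pow_eq_zero_of_natCast_eq_zero {n : ℕ} (hn : (n : R) = 0) (i : σ)
    (f : MvPolynomial σ R) : pderiv i (f ^ n) = 0 := by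
  rw [pderiv_pow, ← map_natCast (C : R →+* MvPolynomial σ R), hn, map_zero, zero_mul, zero_mul]

theorem dvd_pderiv_of_mul_self_dvd {g f : MvPolynomial σ R} (h : g * g ∣ f) (i : σ) :
    g ∣ pderiv i f := by
  obtain ⟨k, rfl⟩ := h
  exact ⟨pderiv i g * k + pderiv i g * k + g * pderiv i k, by
    simp only [Derivation.leibniz, smul_eq_mul]; ring⟩

end MvPolynomial

theorem squarefree_of_casoratian_eq_monomial {K : Type*} [Field K]
    {F G : MvPolynomial (Fin 2) K} {c : K} {a b : ℕ} (hc : c ≠ 0)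
    (h10 : eval ![1, 0] F ≠ 0) (h01 : eval ![0, 1] F ≠ 0)
    (hW : F * pderiv 0 G - G * pderiv 0 F = C c * X 0 ^ a * X 1 ^ b) : Squarefree F := by
  have hF : F ≠ 0 := by rintro rfl; simp at h10
  refine (squarefree_iff_irreducible_sq_not_dvd_of_ne_zero hF).mpr fun g hg hgg => ?_
  have hgp : Prime g := hg.prime
  have hgF : g ∣ F := (dvd_mul_right g g).trans hgg
  have hgW : g ∣ C c * X 0 ^ a * X 1 ^ b := by
    rw [← hW]
    exact dvd_sub (hgF.mul_right _) ((dvd_pderiv_of_mul_self_dvd hgg 0).mul_left _)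
  have hCc : ¬ g ∣ C c := fun h => hg.not_isUnit (isUnit_of_dvd_unit h (hc.isUnit.map C))
  have hX : ∀ i : Fin 2, g ∣ X i → ∀ x : Fin 2 → K, x i = 0 → eval x F = 0 := by
    intro i hi x hx
    obtain ⟨k, hk⟩ := (hg.dvd_symm (X_prime.irreducible) hi).trans hgF
    rw [hk, eval_mul, eval_X, hx, zero_mul]
  rcases hgp.dvd_or_dvd hgW with hgCU | hgV
  · rcases hgp.dvd_or_dvd hgCU with hgC | hgU
    · exact hCc hgC
    · exact h01 (hX 0 (hgp.dvd_of_dvd_pow hgU) _ rfl)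
  · exact h10 (hX 1 (hgp.dvd_of_dvd_pow hgV) _ rfl)

theorem AdjoinRoot.mk_X_ne_zero {R : Type*} [CommRing R] [IsDomain R] {f : Polynomial R}
    (hmonic : f.Monic) (hirr : Irreducible f) (hne : f ≠ Polynomial.X) :
    mk f Polynomial.X ≠ 0 := fun h => hne <| Polynomial.eq_of_monic_of_associated
  hmonic Polynomial.monic_X <| hirr.associated_of_dvd Polynomial.irreducible_X <| mk_eq_zero.mp h

theorem AdjoinRoot.natDegree_dvd_of_root_pow_card_pow_eq {K : Type*} [Field K] [Fintype K]
    {f : Polynomial K} [Fact (Irreducible f)] {j : ℕ}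
    (h : root f ^ Fintype.card K ^ j = root f) : f.natDegree ∣ j := by
  have hf : f ≠ 0 := (Fact.out : Irreducible f).ne_zero
  have := (powerBasis hf).finite
  have : Finite (AdjoinRoot f) := Module.finite_of_finite K
  rw [← powerBasis_dim hf, ← (powerBasis hf).finrank, ← FiniteField.orderOf_frobeniusAlgHom]
  refine orderOf_dvd_of_pow_eq_one (algHom_ext ?_)
  simpa [AlgHom.coe_pow, FiniteField.coe_frobeniusAlgHom, pow_iterate] using h

theorem AdjoinRoot.mk_X_sub_X_pow_card_pow_ne_zero {K : Type*} [Field K] [Fintype K]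
    {f : Polynomial K} [Fact (Irreducible f)] {j : ℕ} (hj0 : 0 < j) (hj : j < f.natDegree) :
    mk f (Polynomial.X - Polynomial.X ^ Fintype.card K ^ j) ≠ 0 := by
  rw [map_sub, map_pow, mk_X, sub_ne_zero]
  exact fun h => hj.not_ge (Nat.le_of_dvd hj0 (natDegree_dvd_of_root_pow_card_pow_eq h.symm))

section PhiPoly

variable {Fq : Type} [Field Fq] {q : ℕ}

theorem eval_one_zero_phiPoly (hq : q ≠ 0) (d : ℕ) :
    eval ![1, 0] (phiPoly Fq q d) = 1 := by
  induction d using Nat.twoStepInduction with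
  | zero => simp [phiPoly]
  | one => simp [phiPoly]
  | more d h0 h1 =>
    rw [phiPoly]
    simp [h0, h1, hq]

theorem eval_zero_one_phiPoly (hq : q ≠ 0) (d : ℕ) :
    eval ![0, 1] (phiPoly Fq q d) = (-Polynomial.X ^ q) ^ ∑ j ∈ Finset.range d, q ^ j := by
  induction d using Nat.twoStepInduction with
  | zero => simp [phiPoly]
  | one => simp [phiPoly]
  | more d h0 h1 =>
    rw [phiPoly]
    simp [h0, h1, hq, Finset.sum_range_succ _ (d + 1), pow_add]

noncomputable def casoratian (Fq : Type) [Field Fq] (q e : ℕ) :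
    MvPolynomial (Fin 2) (Polynomial Fq) :=
  phiPoly Fq q (e + 1) * pderiv 0 (phiPoly Fq q e) -
    phiPoly Fq q e * pderiv 0 (phiPoly Fq q (e + 1))

theorem casoratian_succ (hq : (q : Polynomial Fq) = 0) (e : ℕ) :
    casoratian Fq q (e + 1) =
      -(C (Polynomial.X ^ q ^ (e + 1) - Polynomial.X) * (X 0 ^ q * X 1) ^ q ^ e) *
        casoratian Fq q e := by
  have hU : pderiv 0 ((X 0 - C (Polynomial.X ^ q) * X 1 : MvPolynomial (Fin 2) (Polynomial Fq))
      ^ q ^ (e + 1)) = 0 :=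
    pderiv_pow_eq_zero_of_natCast_eq_zero (by rw [Nat.cast_pow, hq, zero_pow e.succ_ne_zero]) _ _
  have hUV : pderiv 0 ((X 0 ^ q * X 1 : MvPolynomial (Fin 2) (Polynomial Fq)) ^ q ^ e) = 0 := by
    rw [pderiv_pow, Derivation.leibniz, pderiv_pow_eq_zero_of_natCast_eq_zero hq,
      pderiv_X_of_ne (by decide : (1 : Fin 2) ≠ 0)]
    simp
  simp only [casoratian, phiPoly, map_add, Derivation.leibniz, pderiv_C, hU, hUV, smul_eq_mul]
  ring

theorem casoratian_eq (hq : (q : Polynomial Fq) = 0) (e : ℕ) :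
    casoratian Fq q e =
      C (-∏ j ∈ Finset.range e, (Polynomial.X - Polynomial.X ^ q ^ (j + 1))) *
        X 0 ^ (q * ∑ j ∈ Finset.range e, q ^ j) * X 1 ^ ∑ j ∈ Finset.range e, q ^ j := by
  induction e with
  | zero => simp [casoratian, phiPoly]
  | succ e ih =>
    rw [casoratian_succ hq, ih, Finset.prod_range_succ, Finset.sum_range_succ]
    simp only [map_neg, map_mul, map_sub, mul_add, pow_add, pow_mul, mul_pow]
    ring

end PhiPoly

theorem phiPoly_mod_squarefree_general (q : ℕ) (Fq : Type) [Field Fq] [Fintype Fq]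
    (hcard : Fintype.card Fq = q)
    (π : Polynomial Fq) (hmonic : π.Monic) (hirr : Irreducible π)
    (hne : π ≠ Polynomial.X) :
    Squarefree
      (MvPolynomial.map (Ideal.Quotient.mk (Ideal.span {π})) (phiPoly Fq q π.natDegree)) := by
  subst hcard
  have := Fact.mk hirr
  change Squarefree (map (AdjoinRoot.mk π) _)
  have hX := AdjoinRoot.mk_X_ne_zero hmonic hirr hne
  set mk := AdjoinRoot.mk π
  have hq : (Fintype.card Fq : Polynomial Fq) = 0 := by
    rw [← map_natCast Polynomial.C, FiniteField.cast_card_eq_zero, map_zero]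
  have hmap (a b : Polynomial Fq) (P : MvPolynomial (Fin 2) (Polynomial Fq)) :
      eval ![mk a, mk b] (map mk P) = mk (eval ![a, b] P) := by
    rw [eval_map, eval₂_comp]
    exact congrArg (eval₂ mk · P) (funext (Fin.forall_fin_two.mpr ⟨rfl, rfl⟩))
  obtain ⟨e, hD⟩ : ∃ e, π.natDegree = e + 1 := Nat.exists_eq_succ_of_ne_zero hirr.natDegree_pos.ne'
  rw [hD]
  have hW := congrArg (map mk) (casoratian_eq hq e)
  simp only [casoratian, map_sub, map_mul, map_C, map_X, map_pow, ← pderiv_map] at hW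
  refine squarefree_of_casoratian_eq_monomial ?_ ?_ ?_ hW
  · simp only [map_neg, map_prod, neg_ne_zero, Finset.prod_ne_zero_iff, Finset.mem_range]
    exact fun j hj => AdjoinRoot.mk_X_sub_X_pow_card_pow_ne_zero j.succ_pos (by omega)
  · rw [← map_one mk, ← map_zero mk, hmap, eval_one_zero_phiPoly Fintype.card_ne_zero, map_one]
    exact one_ne_zero
  · rw [← map_one mk, ← map_zero mk, hmap, eval_zero_one_phiPoly Fintype.card_ne_zero]
    simp [hX]

/-- With `d = deg π` (where `π ∈ A = 𝔽_q[T]` is monic irreducible, `π ≠ T`, `𝔭 = (π)`),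
the reduction `φ̄_d` of `φ_d` modulo `𝔭` is square-free in `𝔽_𝔭[U,V]`. -/
theorem phiPoly_mod_squarefree (p r q : ℕ) (hp : p.Prime) (hodd : Odd p) (hr : 0 < r)
    (hq : q = p ^ r) (Fq : Type) [Field Fq] [Fintype Fq] (hcard : Fintype.card Fq = q)
    (π : Polynomial Fq) (hmonic : π.Monic) (hirr : Irreducible π)
    (hne : π ≠ Polynomial.X) :
    Squarefree
      (MvPolynomial.map (Ideal.Quotient.mk (Ideal.span {π})) (phiPoly Fq q π.natDegree)) :=
  phiPoly_mod_squarefree_general q Fq hcard π hmonic hirr hne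
end

section
/- Let F be a field, let φ ∈ F[U,V] be a nonzero homogeneous polynomial of degree D ≥ 1, and let P, Q ∈ F[U,V] be nonzero homogeneous polynomials of degrees m and n respectively, with m ≥ n. If P − Q belongs to the ideal of F[U,V] generated by φ − 1, then D divides m − n and P = Q·φ^{(m−n)/D}. -/
/-!
The substitution `f ↦ f(tU, tV)` is a ring homomorphism `F[U,V] → F[U,V][t]` sending a
homogeneous `H` of degree `d` to `H t^d`. It turns the hypothesis into the divisibility
`φ t^D - 1 ∣ P t^m - Q t^n` in a polynomial ring over a domain. As `t` is coprime to
`φ t^D - 1`, this gives `φ t^D - 1 ∣ P t^(m-n) - Q`; writing `m - n = jD + r` with `r < D` and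
using `φ t^D ≡ 1`, also `φ t^D - 1 ∣ P t^r - Q φ^j`, a polynomial of degree `< D`, which must
therefore vanish.
-/

open MvPolynomial

namespace Polynomial

variable {A : Type*} [CommRing A]

theorem isCoprime_X_C_mul_X_pow_sub_one (φ : A) {D : ℕ} (hD : D ≠ 0) :
    IsCoprime X (C φ * X ^ D - 1) := by
  obtain ⟨k, rfl⟩ := Nat.exists_eq_add_one_of_ne_zero hD
  exact ⟨C φ * X ^ k, -1, by ring⟩

theorem eq_mul_pow_of_C_mul_X_pow_sub_one_dvd [IsDomain A] {φ p q : A} {D e : ℕ} (hφ : φ ≠ 0)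
    (hD : 0 < D) (hp : p ≠ 0) (h : C φ * X ^ D - 1 ∣ C p * X ^ e - C q) :
    D ∣ e ∧ p = q * φ ^ (e / D) := by
  set r := e % D
  set j := e / D
  have hreduce : C φ * X ^ D - 1 ∣ C p * X ^ r - C (q * φ ^ j) := by
    have hcongr : C p * X ^ r - C (q * φ ^ j) =
        C (φ ^ j) * (C p * X ^ e - C q) - C p * X ^ r * ((C φ * X ^ D) ^ j - 1) := by
      rw [← Nat.mod_add_div e D]
      simp only [map_mul, map_pow]
      ring
    rw [hcongr]
    exact dvd_sub (dvd_mul_of_dvd_right h _)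
      (dvd_mul_of_dvd_right (sub_one_dvd_pow_sub_one _ j) _)
  have hzero : C p * X ^ r - C (q * φ ^ j) = 0 := by
    refine eq_zero_of_dvd_of_natDegree_lt hreduce ?_
    rw [natDegree_sub_C, natDegree_C_mul_X_pow r p hp, ← C_1, natDegree_sub_C,
      natDegree_C_mul_X_pow D φ hφ]
    exact Nat.mod_lt e hD
  have hr : r = 0 := by
    by_contra hr
    have hcoeff := congrArg (coeff · r) hzero
    simp only [coeff_sub, coeff_C_mul_X_pow, coeff_C, if_neg hr, sub_zero,
      coeff_zero] at hcoeff
    exact hp hcoeff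
  rw [hr, pow_zero, mul_one, sub_eq_zero, C_inj] at hzero
  exact ⟨Nat.dvd_of_mod_eq_zero hr, hzero⟩

end Polynomial

namespace MvPolynomial

theorem IsHomogeneous.aeval_C_X_mul_X {σ R : Type*} [CommRing R] {H : MvPolynomial σ R}
    {d : ℕ} (hH : H.IsHomogeneous d) :
    MvPolynomial.aeval (fun i => Polynomial.C (X i) * Polynomial.X) H =
      Polynomial.C H * Polynomial.X ^ d := by
  conv_lhs => rw [H.as_sum]
  conv_rhs => rw [H.as_sum]
  rw [map_sum, map_sum, Finset.sum_mul]
  refine Finset.sum_congr rfl fun s hs => ?_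
  have hdeg : s.degree = d := Finsupp.degree_eq_weight_one (R := ℕ) ▸ hH (mem_support_iff.1 hs)
  rw [aeval_monomial, ← hdeg, Finsupp.degree_apply, monomial_eq]
  simp only [Finsupp.prod, mul_pow, Finset.prod_mul_distrib, Finset.prod_pow_eq_pow_sum, map_mul,
    map_prod, map_pow, Polynomial.algebraMap_apply, algebraMap_eq, mul_assoc]

end MvPolynomial

theorem homogeneous_sub_mem_span_sub_one_general (F : Type) [Field F]
    (φ P Q : MvPolynomial (Fin 2) F) (D m n : ℕ)
    (hφ : φ ≠ 0) (hD : 1 ≤ D) (hhom : φ.IsHomogeneous D)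
    (hP : P ≠ 0) (hPhom : P.IsHomogeneous m) (hQhom : Q.IsHomogeneous n)
    (hmn : n ≤ m) (hmem : P - Q ∈ Ideal.span {φ - 1}) :
    D ∣ m - n ∧ P = Q * φ ^ ((m - n) / D) := by
  obtain ⟨e, rfl⟩ := Nat.exists_eq_add_of_le hmn
  rw [Nat.add_sub_cancel_left]
  have hdvd := map_dvd
    (aeval fun i => (Polynomial.C (X i) * Polynomial.X : Polynomial (MvPolynomial (Fin 2) F)))
    (Ideal.mem_span_singleton.1 hmem)
  rw [map_sub, map_sub, map_one, hhom.aeval_C_X_mul_X,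
    hPhom.aeval_C_X_mul_X, hQhom.aeval_C_X_mul_X,
    show Polynomial.C P * Polynomial.X ^ (n + e) - Polynomial.C Q * Polynomial.X ^ n =
      Polynomial.X ^ n * (Polynomial.C P * Polynomial.X ^ e - Polynomial.C Q) by ring] at hdvd
  have hcoprime : IsCoprime (Polynomial.C φ * Polynomial.X ^ D - 1) (Polynomial.X ^ n) :=
    (Polynomial.isCoprime_X_C_mul_X_pow_sub_one φ (by omega)).pow_left.symm
  exact Polynomial.eq_mul_pow_of_C_mul_X_pow_sub_one_dvd hφ hD hP
    (hcoprime.dvd_of_dvd_mul_left hdvd)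

/-- Let `F` be a field, `φ ∈ F[U,V]` a nonzero homogeneous polynomial of degree `D ≥ 1`, and
`P, Q ∈ F[U,V]` nonzero homogeneous polynomials of degrees `m` and `n` with `m ≥ n`.  If
`P − Q` belongs to the ideal generated by `φ − 1`, then `D ∣ m − n` and
`P = Q·φ^{(m−n)/D}`. -/
theorem homogeneous_sub_mem_span_sub_one (F : Type) [Field F]
    (φ P Q : MvPolynomial (Fin 2) F) (D m n : ℕ)
    (hφ : φ ≠ 0) (hD : 1 ≤ D) (hhom : φ.IsHomogeneous D)
    (hP : P ≠ 0) (hQ : Q ≠ 0) (hPhom : P.IsHomogeneous m) (hQhom : Q.IsHomogeneous n)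
    (hmn : n ≤ m) (hmem : P - Q ∈ Ideal.span {φ - 1}) :
    D ∣ m - n ∧ P = Q * φ ^ ((m - n) / D) :=
  homogeneous_sub_mem_span_sub_one_general F φ P Q D m n hφ hD hhom hP hPhom hQhom hmn hmem
end

section
/- With d = deg π, let P, Q ∈ 𝔽_𝔭[U,V] be nonzero homogeneous polynomials of total degrees m and n respectively. If P − Q lies in the ideal of 𝔽_𝔭[U,V] generated by φ̄_d − 1, then m ≡ n modulo (q^d − 1)/(q − 1). Equivalently, the corresponding isobaric weights k₁ = (q−1)·m and k₂ = (q−1)·n satisfy k₁ ≡ k₂ modulo q^d − 1. -/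
/-!
Grade `𝔽_𝔭[U,V]` by `ℤ/N`, where `N = 1 + q + ⋯ + q^(d-1)` is the degree of the homogeneous
polynomial `φ̄_d`. Then `φ̄_d - 1` is `ℤ/N`-homogeneous of degree `0`, so if `m ≢ n (mod N)`,
taking the class-`m` part of `P - Q = (φ̄_d - 1) * h` gives `P = (φ̄_d - 1) * h'`. But a nonzero
multiple of `F - 1`, with `F ≠ 0` homogeneous of positive degree `N`, is never homogeneous: away
from its degree the components satisfy `h'_j = F * h'_(j-N)`, which forces `h'` to vanish below
that degree and then contradicts `F * h'_top ≠ 0`. Finally `φ̄_d ≠ 0` since `φ_d(1, 0) = 1`.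
-/

open MvPolynomial

namespace MvPolynomial

variable {σ R : Type*}

section CommSemiring

variable [CommSemiring R]

theorem homogeneousComponent_totalDegree_ne_zero {h : MvPolynomial σ R} (h0 : h ≠ 0) :
    homogeneousComponent h.totalDegree h ≠ 0 := by
  obtain ⟨d, hd, hdeg⟩ := Finset.exists_mem_eq_sup h.support (support_nonempty.mpr h0)
    fun s => s.sum fun _ e => e
  refine ne_of_apply_ne (coeff d) ?_
  rw [coeff_homogeneousComponent, if_pos, coeff_zero]
  · exact mem_support_iff.mp hd
  · rw [Finsupp.degree, totalDegree, hdeg]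
    rfl

attribute [local instance] gradedAlgebra in
theorem IsHomogeneous.homogeneousComponent_mul {F : MvPolynomial σ R} {N : ℕ}
    (hF : F.IsHomogeneous N) (h : MvPolynomial σ R) (j : ℕ) :
    homogeneousComponent j (F * h) =
      if N ≤ j then F * homogeneousComponent (j - N) h else 0 := by
  simp only [← decomposition.decompose'_apply]
  exact DirectSum.coe_decompose_mul_of_left_mem (homogeneousSubmodule σ R) j hF

attribute [local instance] weightedGradedAlgebra in
theorem weightedHomogeneousComponent_mul_of_isWeightedHomogeneous_zero {M : Type*}
    [AddCommMonoid M] [DecidableEq M] {w : σ → M} {F : MvPolynomial σ R}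
    (hF : IsWeightedHomogeneous w F 0) (h : MvPolynomial σ R) (r : M) :
    weightedHomogeneousComponent w r (F * h) = F * weightedHomogeneousComponent w r h := by
  simp only [← weightedDecomposition.decompose'_apply]
  exact DirectSum.coe_decompose_mul_of_left_mem_zero (weightedHomogeneousSubmodule R w) hF

theorem IsHomogeneous.isWeightedHomogeneous_natCast {M : Type*} [AddCommMonoidWithOne M]
    {φ : MvPolynomial σ R} {n : ℕ} (hφ : φ.IsHomogeneous n) :
    IsWeightedHomogeneous (fun _ => (1 : M)) φ n := by
  intro d hd
  simp [← hφ hd, Finsupp.weight_apply, Finsupp.sum]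

end CommSemiring

section Domain

variable [CommRing R] [IsDomain R]

theorem eq_zero_of_isHomogeneous_sub_one_mul {F h : MvPolynomial σ R} {N m : ℕ} (hN : 0 < N)
    (hF : F.IsHomogeneous N) (hF0 : F ≠ 0) (hFh : ((F - 1) * h).IsHomogeneous m) : h = 0 := by
  by_contra h0
  have recurrence : ∀ j ≠ m, homogeneousComponent j h =
      if N ≤ j then F * homogeneousComponent (j - N) h else 0 := by
    intro j hj
    have hcomp := homogeneousComponent_of_mem (m := j) hFh
    rw [if_neg hj, sub_mul, one_mul, map_sub, hF.homogeneousComponent_mul, sub_eq_zero] at hcomp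
    exact hcomp.symm
  have below : ∀ j < m, homogeneousComponent j h = 0 := by
    intro j
    induction j using Nat.strong_induction_on with
    | _ j ih =>
      intro hj
      rw [recurrence j hj.ne]
      split_ifs with hNj
      · rw [ih (j - N) (by omega) (by omega), mul_zero]
      · rfl
  have htop := homogeneousComponent_totalDegree_ne_zero h0
  have hm : m ≤ h.totalDegree := by
    by_contra! hlt
    exact htop (below _ hlt)
  have hcomp := recurrence (h.totalDegree + N) (by omega)
  rw [homogeneousComponent_eq_zero _ _ (Nat.lt_add_of_pos_right hN), if_pos (by omega),
    Nat.add_sub_cancel] at hcomp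
  exact htop ((mul_eq_zero.mp hcomp.symm).resolve_left hF0)

theorem modEq_of_sub_mem_span_sub_one {F P Q : MvPolynomial σ R} {N m n : ℕ} (hN : 0 < N)
    (hF : F.IsHomogeneous N) (hF0 : F ≠ 0) (hP : P ≠ 0) (hPm : P.IsHomogeneous m)
    (hQn : Q.IsHomogeneous n) (hPQ : P - Q ∈ Ideal.span {F - 1}) : m ≡ n [MOD N] := by
  rw [← ZMod.natCast_eq_natCast_iff]
  by_contra hmn
  obtain ⟨h, hh⟩ := Ideal.mem_span_singleton.mp hPQ
  let w : σ → ZMod N := fun _ => 1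
  have hF1 : IsWeightedHomogeneous w (F - 1) 0 := by
    have hFw : IsWeightedHomogeneous w F 0 := by
      simpa using hF.isWeightedHomogeneous_natCast (M := ZMod N)
    exact hFw.sub (isWeightedHomogeneous_one R w)
  have hP_part : weightedHomogeneousComponent w m (P - Q) = P := by
    rw [map_sub, hPm.isWeightedHomogeneous_natCast.weightedHomogeneousComponent_same,
      hQn.isWeightedHomogeneous_natCast.weightedHomogeneousComponent_ne _ hmn, sub_zero]
  have hP_eq : P = (F - 1) * weightedHomogeneousComponent w m h := by
    rw [← weightedHomogeneousComponent_mul_of_isWeightedHomogeneous_zero hF1, ← hh, hP_part]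
  have hpart_zero : weightedHomogeneousComponent w m h = 0 :=
    eq_zero_of_isHomogeneous_sub_one_mul hN hF hF0 (hP_eq ▸ hPm)
  exact hP (by rw [hP_eq, hpart_zero, mul_zero])

end Domain

end MvPolynomial

open Finset

section phiPoly

variable (Fq : Type) [Field Fq] (q : ℕ)

theorem phiPoly_isHomogeneous (d : ℕ) :
    (phiPoly Fq q d).IsHomogeneous (∑ i ∈ range d, q ^ i) := by
  have hCX : (C (Polynomial.X ^ q) * X 1 :
      MvPolynomial (Fin 2) (Polynomial Fq)).IsHomogeneous (0 + 1) :=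
    (isHomogeneous_C _ _).mul (isHomogeneous_X _ _)
  rw [zero_add] at hCX
  have hL := (isHomogeneous_X (Polynomial Fq) (0 : Fin 2)).sub hCX
  induction d using phiPoly.induct with
  | case1 => simpa [phiPoly] using isHomogeneous_one (Fin 2) (Polynomial Fq)
  | case2 => simpa [phiPoly] using hL
  | case3 d ih₁ ih₀ =>
    have h₁ := ih₁.mul (hL.pow (q ^ (d + 1)))
    have h₀ := ((isHomogeneous_C _ (Polynomial.X ^ q ^ (d + 1) - Polynomial.X)).mul ih₀).mul
      ((((isHomogeneous_X _ 0).pow q).mul (isHomogeneous_X _ 1)).pow (q ^ d))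
    have hdeg₁ : ∑ i ∈ range (d + 1), q ^ i + 1 * q ^ (d + 1) = ∑ i ∈ range (d + 2), q ^ i := by
      rw [sum_range_succ _ (d + 1), one_mul]
    have hdeg₀ : 0 + ∑ i ∈ range d, q ^ i + (1 * q + 1) * q ^ d =
        ∑ i ∈ range (d + 2), q ^ i := by
      rw [sum_range_succ _ (d + 1), sum_range_succ]
      ring
    rw [phiPoly]
    exact (hdeg₁ ▸ h₁).add (hdeg₀ ▸ h₀)

variable {q}

theorem eval_one_zero_map_phiPoly {S : Type*} [CommRing S] (hq : q ≠ 0) (f : Polynomial Fq →+* S)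
    (d : ℕ) : eval ![1, 0] (map f (phiPoly Fq q d)) = 1 := by
  induction d using phiPoly.induct with
  | case1 => simp [phiPoly]
  | case2 => simp [phiPoly]
  | case3 d ih₁ ih₀ =>
    rw [phiPoly]
    simp [ih₁, hq]

theorem map_phiPoly_ne_zero {S : Type*} [CommRing S] [Nontrivial S] (hq : q ≠ 0)
    (f : Polynomial Fq →+* S) (d : ℕ) : map f (phiPoly Fq q d) ≠ 0 := fun h0 => by
  simpa [h0] using eval_one_zero_map_phiPoly Fq hq f d

end phiPoly

theorem degree_congruence_of_sub_mem_span_general (q : ℕ)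
    (Fq : Type) [Field Fq] [Fintype Fq] (hcard : Fintype.card Fq = q)
    (π : Polynomial Fq) (hirr : Irreducible π)
    (P Q : MvPolynomial (Fin 2) (Polynomial Fq ⧸ Ideal.span {π})) (m n : ℕ)
    (hP : P ≠ 0) (hPhom : P.IsHomogeneous m) (hQhom : Q.IsHomogeneous n)
    (hmem : P - Q ∈ Ideal.span
      {MvPolynomial.map (Ideal.Quotient.mk (Ideal.span {π})) (phiPoly Fq q π.natDegree)
        - 1}) :
    m ≡ n [MOD ∑ i ∈ Finset.range π.natDegree, q ^ i] ∧
      (q - 1) * m ≡ (q - 1) * n [MOD q ^ π.natDegree - 1] := by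
  have hq : q ≠ 0 := hcard ▸ Fintype.card_ne_zero
  have : (Ideal.span {π}).IsPrime := (Ideal.span_singleton_prime hirr.ne_zero).mpr hirr.prime
  have hN : 0 < ∑ i ∈ range π.natDegree, q ^ i :=
    sum_pos (fun i _ => pow_pos (Nat.pos_of_ne_zero hq) i)
      (nonempty_range_iff.mpr hirr.natDegree_pos.ne')
  have hcong := modEq_of_sub_mem_span_sub_one hN ((phiPoly_isHomogeneous Fq q _).map _)
    (map_phiPoly_ne_zero Fq hq _ _) hP hPhom hQhom hmem
  refine ⟨hcong, ?_⟩
  rw [← geom_sum_mul_of_one_le (Nat.one_le_iff_ne_zero.mpr hq), mul_comm]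
  exact hcong.mul_left' _

/-- With `d = deg π`, let `P, Q ∈ 𝔽_𝔭[U,V]` be nonzero homogeneous polynomials of total
degrees `m`, `n`.  If `P − Q` lies in the ideal generated by `φ̄_d − 1`, then
`m ≡ n (mod (q^d − 1)/(q − 1))`; equivalently the isobaric weights `k₁ = (q−1)·m` and
`k₂ = (q−1)·n` satisfy `k₁ ≡ k₂ (mod q^d − 1)`. -/
theorem degree_congruence_of_sub_mem_span (p r q : ℕ) (hp : p.Prime) (hodd : Odd p)
    (hr : 0 < r) (hq : q = p ^ r)
    (Fq : Type) [Field Fq] [Fintype Fq] (hcard : Fintype.card Fq = q)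
    (π : Polynomial Fq) (hmonic : π.Monic) (hirr : Irreducible π)
    (hne : π ≠ Polynomial.X)
    (P Q : MvPolynomial (Fin 2) (Polynomial Fq ⧸ Ideal.span {π})) (m n : ℕ)
    (hP : P ≠ 0) (hQ : Q ≠ 0) (hPhom : P.IsHomogeneous m) (hQhom : Q.IsHomogeneous n)
    (hmem : P - Q ∈ Ideal.span
      {MvPolynomial.map (Ideal.Quotient.mk (Ideal.span {π})) (phiPoly Fq q π.natDegree)
        - 1}) :
    m ≡ n [MOD ∑ i ∈ Finset.range π.natDegree, q ^ i] ∧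
      (q - 1) * m ≡ (q - 1) * n [MOD q ^ π.natDegree - 1] :=
  degree_congruence_of_sub_mem_span_general q Fq hcard π hirr P Q m n hP hPhom hQhom hmem
end

section
/- Let F be a perfect field of characteristic p > 0 and let φ ∈ F[U,V] be a homogeneous, square-free polynomial that is divisible by neither U nor V. Then every common divisor of φ and U·(∂φ/∂U) in F[U,V] is a unit. -/
/-!
An irreducible common factor `q` of `φ` and `U · ∂φ/∂U` divides neither `U` nor `V`, since `φ`
does not; by Euler's identity `U · ∂φ/∂U + V · ∂φ/∂V = D φ` it therefore divides both partial
derivatives of `φ`. Writing `φ = q ψ` with `q ∤ ψ` (square-freeness), the Leibniz rule gives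
`q ∣ ∂q/∂U` and `q ∣ ∂q/∂V`, so both derivatives of `q` vanish for degree reasons. In
characteristic `p` this means that all exponents of `q` are divisible by `p`, and over a perfect
field `q` is then a `p`-th power, contradicting irreducibility.
-/

open MvPolynomial

theorem Prime.dvd_derivation_of_dvd_squarefree {R A : Type*} [CommSemiring R] [CommRing A]
    [Algebra R A] (D : Derivation R A A) {f q : A} (hq : Prime q) (hf : Squarefree f)
    (hqf : q ∣ f) (hD : q ∣ D f) : q ∣ D q := by
  obtain ⟨g, rfl⟩ := hqf
  have hqg : ¬ q ∣ g := fun ⟨t, ht⟩ => hq.not_isUnit (hf q ⟨t, by rw [ht, mul_assoc]⟩)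
  rw [D.leibniz, smul_eq_mul, smul_eq_mul, dvd_add_right (dvd_mul_right q _)] at hD
  exact (hq.dvd_or_dvd hD).resolve_left hqg

namespace MvPolynomial

variable {σ R : Type*} [CommSemiring R]

theorem degreeOf_pderiv_lt {i : σ} {f : MvPolynomial σ R} (h : pderiv i f ≠ 0) :
    degreeOf i (pderiv i f) < degreeOf i f := by
  have succ_le : ∀ m ∈ (pderiv i f).support, m i + 1 ≤ degreeOf i f := by
    intro m hm
    have hc : coeff (m + Finsupp.single i 1) f ≠ 0 := by
      rw [mem_support_iff, coeff_pderiv] at hm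
      exact left_ne_zero_of_mul hm
    simpa using monomial_le_degreeOf i (mem_support_iff.mpr hc)
  obtain ⟨m, hm⟩ := support_nonempty.mpr h
  rw [degreeOf_lt_iff (Nat.zero_lt_of_lt (succ_le m hm))]
  exact fun n hn => succ_le n hn

theorem degreeOf_le_of_dvd [NoZeroDivisors R] {i : σ} {f g : MvPolynomial σ R} (h : f ∣ g)
    (hg : g ≠ 0) : degreeOf i f ≤ degreeOf i g := by
  obtain ⟨c, rfl⟩ := h
  rw [degreeOf_mul_eq (left_ne_zero_of_mul hg) (right_ne_zero_of_mul hg)]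
  exact Nat.le_add_right _ _

theorem pderiv_eq_zero_of_dvd [NoZeroDivisors R] {i : σ} {f : MvPolynomial σ R}
    (h : f ∣ pderiv i f) : pderiv i f = 0 := by
  by_contra hne
  exact (degreeOf_le_of_dvd h hne).not_gt (degreeOf_pderiv_lt hne)

theorem dvd_of_mem_support_of_pderiv_eq_zero [NoZeroDivisors R] (p : ℕ) [CharP R p] {i : σ}
    {f : MvPolynomial σ R} (h : pderiv i f = 0) {m : σ →₀ ℕ} (hm : m ∈ f.support) :
    p ∣ m i := by
  rcases Nat.eq_zero_or_pos (m i) with hmi | hmi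
  · simp [hmi]
  have hcoeff := coeff_pderiv (i := i) f (m - Finsupp.single i 1)
  rw [h, coeff_zero, Finsupp.sub_add_single_one_cancel hmi.ne'] at hcoeff
  have hcast : ((m - Finsupp.single i 1 : σ →₀ ℕ) i : R) + 1 = m i := by
    rw [Finsupp.tsub_apply, Finsupp.single_eq_same, ← Nat.cast_add_one, Nat.sub_add_cancel hmi]
  rw [hcast, eq_comm, mul_eq_zero, CharP.cast_eq_zero_iff R p] at hcoeff
  exact hcoeff.resolve_left (mem_support_iff.mp hm)

theorem mem_rangeS_frobenius_of_forall_dvd (p : ℕ) [ExpChar R p] [PerfectRing R p]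
    {f : MvPolynomial σ R} (h : ∀ m ∈ f.support, ∀ i, p ∣ m i) :
    f ∈ (frobenius (MvPolynomial σ R) p).rangeS := by
  rw [← support_sum_monomial_coeff f]
  refine Subsemiring.sum_mem _ fun m hm => ⟨monomial (m.mapRange (· / p) (Nat.zero_div p))
    ((frobeniusEquiv R p).symm (coeff m f)), ?_⟩
  rw [frobenius_def, monomial_pow, frobeniusEquiv_symm_pow_p]
  congr 2
  ext j
  simp [Nat.mul_div_cancel' (h m hm j)]

theorem not_irreducible_of_forall_pderiv_eq_zero [NoZeroDivisors R] (p : ℕ) [Fact p.Prime]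
    [CharP R p] [PerfectRing R p] {f : MvPolynomial σ R} (h : ∀ i, pderiv i f = 0) :
    ¬ Irreducible f := by
  obtain ⟨r, rfl⟩ := mem_rangeS_frobenius_of_forall_dvd p fun m hm i =>
    dvd_of_mem_support_of_pderiv_eq_zero p (h i) hm
  exact not_irreducible_pow (Fact.out : p.Prime).one_lt.ne'

theorem exists_not_dvd_pderiv_of_squarefree {R : Type*} [CommRing R] [IsDomain R] (p : ℕ)
    [Fact p.Prime] [CharP R p] [PerfectRing R p] {f q : MvPolynomial σ R} (hq : Prime q)
    (hf : Squarefree f) (hqf : q ∣ f) : ∃ i, ¬ q ∣ pderiv i f := by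
  by_contra! h
  refine not_irreducible_of_forall_pderiv_eq_zero p (fun i => ?_) hq.irreducible
  exact pderiv_eq_zero_of_dvd (hq.dvd_derivation_of_dvd_squarefree (pderiv i) hf hqf (h i))

end MvPolynomial

/-- Let `F` be a perfect field of characteristic `p > 0` and `φ ∈ F[U,V]` a homogeneous,
square-free polynomial divisible by neither `U` nor `V`.  Then every common divisor of `φ`
and `U·(∂φ/∂U)` in `F[U,V]` is a unit. -/
theorem no_common_factor_with_U_pderiv (F : Type) [Field F] [PerfectField F]
    (p : ℕ) [CharP F p] (hp : 0 < p)
    (φ : MvPolynomial (Fin 2) F) (D : ℕ) (hhom : φ.IsHomogeneous D)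
    (hsf : Squarefree φ) (hU : ¬ (X 0 ∣ φ)) (hV : ¬ (X 1 ∣ φ)) :
    ∀ a : MvPolynomial (Fin 2) F,
      a ∣ φ → a ∣ X 0 * MvPolynomial.pderiv 0 φ → IsUnit a := by
  have : NeZero p := ⟨hp.ne'⟩
  have : Fact p.Prime := CharP.char_is_prime_of_pos F p
  have hφ : φ ≠ 0 := by rintro rfl; exact hU (dvd_zero _)
  suffices IsRelPrime φ (X 0 * pderiv 0 φ) from fun a => @this a
  refine WfDvdMonoid.isRelPrime_of_no_irreducible_factors (fun h => hφ h.1) fun q hq hqφ hqU => ?_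
  replace hq : Prime q := hq.prime
  have not_dvd_X (i : Fin 2) (hXi : ¬ X i ∣ φ) : ¬ q ∣ X i := fun hqX =>
    hXi ((hq.irreducible.associated_of_dvd X_prime.irreducible hqX).symm.dvd.trans hqφ)
  have h0 : q ∣ pderiv 0 φ := (hq.dvd_or_dvd hqU).resolve_left (not_dvd_X 0 hU)
  have h1 : q ∣ pderiv 1 φ := by
    have euler := hhom.sum_X_mul_pderiv
    rw [Fin.sum_univ_two, nsmul_eq_mul] at euler
    have hqV : q ∣ X 1 * pderiv 1 φ :=
      (dvd_add_right hqU).mp (euler ▸ dvd_mul_of_dvd_right hqφ _)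
    exact (hq.dvd_or_dvd hqV).resolve_left (not_dvd_X 1 hV)
  obtain ⟨i, hi⟩ := exists_not_dvd_pderiv_of_squarefree p hq hsf hqφ
  fin_cases i
  exacts [hi h0, hi h1]
end

section
/- Let R ⊆ S be integral domains, with S a commutative R-algebra, let n ≥ 1 be an integer, let a, b ∈ S be algebraically independent over R, and let c ∈ S satisfy c^n = a·b. Then the kernel of the R-algebra homomorphism R[U,V,Z] → S determined by U ↦ a, V ↦ b, Z ↦ c is exactly the principal ideal generated by UV − Z^n. -/
/-!
Write `R[U,V,Z] = A[Z]` with `A = R[U,V]`, which `U ↦ a, V ↦ b` embeds into `S`. The kernel of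
`Z ↦ c` contains the monic polynomial `Z^n - UV`, and it is generated by it as soon as
`Z^n - UV` is irreducible over `K = Frac A`: a monic polynomial that divides over `K` divides
over `A`. For irreducibility, take a root `γ` of `Z^n - UV` in an algebraic closure of `K` and
put `d = [K(γ) : K]`. Its norm `e` satisfies `e^n = N(γ^n) = (UV)^d`; clearing denominators and
comparing degrees in `U` gives `n ∣ d`, hence `d = n`.
-/

section
open Polynomial IntermediateField

lemma MvPolynomial.dvd_of_pow_eq_pow_mul_pow {σ R : Type*} [CommRing R] [IsDomain R] {i : σ}
    {w p q : MvPolynomial σ R} (hw : w.degreeOf i = 1) (hq : q ≠ 0) {n d : ℕ}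
    (h : p ^ n = w ^ d * q ^ n) : n ∣ d := by
  have hdegreeOf_pow (r : MvPolynomial σ R) : (r ^ n).degreeOf i = n * r.degreeOf i := by
    obtain rfl | hr := eq_or_ne r 0
    · cases n <;> simp
    · exact degreeOf_pow_eq i r n hr
  have hw0 : w ≠ 0 := ne_zero_of_degreeOf_ne_zero (i := i) (by simp [hw])
  have hdeg := congrArg (degreeOf i) h
  rw [degreeOf_mul_eq (pow_ne_zero _ hw0) (pow_ne_zero _ hq), hdegreeOf_pow, hdegreeOf_pow,
    degreeOf_pow_eq i w d hw0, hw, mul_one] at hdeg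
  exact (Nat.dvd_add_left (dvd_mul_right n _)).mp (hdeg ▸ dvd_mul_right n _)

lemma IsFractionRing.dvd_of_pow_eq_algebraMap_pow {A K : Type*} [CommRing A] [IsDomain A]
    [Field K] [Algebra A K] [IsFractionRing A K] {n : ℕ} {w : A}
    (hw : ∀ (p q : A) (d : ℕ), q ≠ 0 → p ^ n = w ^ d * q ^ n → n ∣ d)
    (e : K) (d : ℕ) (he : e ^ n = algebraMap A K w ^ d) : n ∣ d := by
  obtain ⟨p, q, hq, rfl⟩ := IsFractionRing.div_surjective (A := A) e
  have hq0 : algebraMap A K q ≠ 0 := IsFractionRing.to_map_ne_zero_of_mem_nonZeroDivisors hq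
  refine hw p q d (nonZeroDivisors.ne_zero hq) (IsFractionRing.injective A K ?_)
  rw [div_pow, div_eq_iff (pow_ne_zero _ hq0)] at he
  simpa only [map_pow, map_mul] using he

lemma Algebra.norm_adjoinSimple_gen_pow {K L : Type*} [Field K] [Field L] [Algebra K L] {n : ℕ}
    {t : K} {c : L} (hc : c ^ n = algebraMap K L t) :
    Algebra.norm K (AdjoinSimple.gen K c) ^ n = t ^ Module.finrank K K⟮c⟯ := by
  have hgen : AdjoinSimple.gen K c ^ n = algebraMap K K⟮c⟯ t := Subtype.ext hc
  rw [← map_pow, hgen, Algebra.norm_algebraMap]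

lemma X_pow_sub_C_irreducible_of_forall_pow_eq {K : Type*} [Field K] {n : ℕ} (hn : n ≠ 0)
    {t : K} (ht : ∀ (e : K) (d : ℕ), e ^ n = t ^ d → n ∣ d) :
    Irreducible (X ^ n - C t) := by
  have hmonic : (X ^ n - C t).Monic := monic_X_pow_sub_C t hn
  obtain ⟨c, hroot⟩ := IsAlgClosed.exists_aeval_eq_zero (AlgebraicClosure K) (X ^ n - C t)
    (by rw [degree_X_pow_sub_C (Nat.pos_of_ne_zero hn)]; exact_mod_cast hn)
  have hc : c ^ n = algebraMap K _ t := by simpa [sub_eq_zero] using hroot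
  have hint : IsIntegral K c := ⟨_, hmonic, hroot⟩
  have hfinrank : Module.finrank K K⟮c⟯ = (minpoly K c).natDegree := adjoin.finrank hint
  have hn_dvd : n ∣ (minpoly K c).natDegree :=
    hfinrank ▸ ht _ _ (Algebra.norm_adjoinSimple_gen_pow hc)
  have heq : X ^ n - C t = minpoly K c :=
    eq_of_monic_of_dvd_of_natDegree_le (minpoly.monic hint) hmonic (minpoly.dvd K c hroot)
      (by rw [natDegree_X_pow_sub_C]; exact Nat.le_of_dvd (minpoly.natDegree_pos hint) hn_dvd)
  exact heq ▸ minpoly.irreducible hint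

variable {A S : Type*} [CommRing A] [IsDomain A] [CommRing S] [IsDomain S] [Algebra A S]
  [FaithfulSMul A S]

lemma Polynomial.ker_aeval_eq_span_of_irreducible_map {f : A[X]} (hf : f.Monic)
    (hirr : Irreducible (f.map (algebraMap A (FractionRing A)))) {c : S} (hc : aeval c f = 0) :
    RingHom.ker (aeval c).toRingHom = Ideal.span {f} := by
  let := FractionRing.liftAlgebra A (FractionRing S)
  set c' := algebraMap S (FractionRing S) c
  have haeval (p : A[X]) : aeval c' (p.map (algebraMap A (FractionRing A))) =
      algebraMap S (FractionRing S) (aeval c p) := by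
    rw [aeval_map_algebraMap, aeval_algebraMap_apply]
  have hminpoly : f.map (algebraMap A (FractionRing A)) = minpoly (FractionRing A) c' :=
    minpoly.eq_of_irreducible_of_monic hirr (by rw [haeval, hc, map_zero]) (hf.map _)
  ext p
  rw [RingHom.mem_ker, AlgHom.toRingHom_eq_coe, AlgHom.coe_toRingHom, Ideal.mem_span_singleton,
    ← map_dvd_map _ (IsFractionRing.injective A (FractionRing A)) hf, hminpoly, minpoly.dvd_iff,
    haeval, map_eq_zero_iff _ (IsFractionRing.injective S (FractionRing S))]

lemma Polynomial.ker_aeval_eq_span_X_pow_sub_C {n : ℕ} (hn : n ≠ 0) {w : A}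
    (hw : ∀ (p q : A) (d : ℕ), q ≠ 0 → p ^ n = w ^ d * q ^ n → n ∣ d) {c : S}
    (hc : c ^ n = algebraMap A S w) :
    RingHom.ker (aeval c).toRingHom = Ideal.span {X ^ n - C w} := by
  refine ker_aeval_eq_span_of_irreducible_map (monic_X_pow_sub_C w hn) ?_ (by simp [hc])
  rw [Polynomial.map_sub, Polynomial.map_pow, map_X, map_C]
  exact X_pow_sub_C_irreducible_of_forall_pow_eq hn
    (IsFractionRing.dvd_of_pow_eq_algebraMap_pow hw)

end

namespace MvPolynomial

variable (R : Type*) [CommRing R] (n : ℕ)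

noncomputable def finSuccEquivLast :
    MvPolynomial (Fin (n + 1)) R ≃ₐ[R] Polynomial (MvPolynomial (Fin n) R) :=
  (renameEquiv R (finRotate (n + 1))).trans (finSuccEquiv R n)

variable {R n}

@[simp]
lemma finSuccEquivLast_C (r : R) :
    finSuccEquivLast R n (C r) = Polynomial.C (C r) := by
  simp [finSuccEquivLast, finSuccEquiv_apply]

@[simp]
lemma finSuccEquivLast_X_last : finSuccEquivLast R n (X (Fin.last n)) = Polynomial.X := by
  simp [finSuccEquivLast, finSuccEquiv_X_zero]

@[simp]
lemma finSuccEquivLast_X_castSucc (i : Fin n) :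
    finSuccEquivLast R n (X i.castSucc) = Polynomial.C (X i) := by
  simp [finSuccEquivLast, finSuccEquiv_X_succ]

lemma aeval_eq_eval₂RingHom_comp_finSuccEquivLast {S : Type*} [CommRing S] [Algebra R S]
    (x : Fin (n + 1) → S) :
    (aeval x).toRingHom = (Polynomial.eval₂RingHom (aeval (Fin.init x)).toRingHom
      (x (Fin.last n))).comp (finSuccEquivLast R n).toRingHom := by
  refine ringHom_ext (fun r => ?_) (Fin.lastCases ?_ fun i => ?_) <;> simp [Fin.init]

end MvPolynomial

open MvPolynomial

theorem ker_aeval_eq_span_UV_sub_Zn_general (R S : Type) [CommRing R] [IsDomain R]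
    [CommRing S] [IsDomain S] [Algebra R S]
    (n : ℕ) (hn : 1 ≤ n) (a b c : S)
    (hab : AlgebraicIndependent R ![a, b]) (hc : c ^ n = a * b) :
    RingHom.ker (MvPolynomial.aeval (R := R) ![a, b, c]).toRingHom =
      Ideal.span {(X 0 * X 1 - X 2 ^ n : MvPolynomial (Fin 3) R)} := by
  let _ : Algebra (MvPolynomial (Fin 2) R) S := (MvPolynomial.aeval (R := R) ![a, b]).toAlgebra
  have : FaithfulSMul (MvPolynomial (Fin 2) R) S :=
    (faithfulSMul_iff_algebraMap_injective _ _).2 hab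
  have hdegreeOf : (X 0 * X 1 : MvPolynomial (Fin 2) R).degreeOf 0 = 1 := by
    simp [degreeOf_mul_eq, degreeOf_X]
  have hker := Polynomial.ker_aeval_eq_span_X_pow_sub_C (c := c) (Nat.one_le_iff_ne_zero.mp hn)
    (fun _ _ _ hq h => dvd_of_pow_eq_pow_mul_pow hdegreeOf hq h)
    (by simp [hc, RingHom.algebraMap_toAlgebra])
  have hsplit : (aeval ![a, b, c]).toRingHom =
      (Polynomial.aeval c).toRingHom.comp (finSuccEquivLast R 2).toRingHom := by
    have hinit : Fin.init ![a, b, c] = ![a, b] := by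
      ext i; fin_cases i <;> rfl
    rw [aeval_eq_eval₂RingHom_comp_finSuccEquivLast, hinit]
    rfl
  have hgenerator : finSuccEquivLast R 2 (X 2 ^ n - X 0 * X 1) =
      Polynomial.X ^ n - Polynomial.C (X 0 * X 1) := by
    rw [show (2 : Fin 3) = Fin.last 2 from rfl, show (0 : Fin 3) = Fin.castSucc 0 from rfl,
      show (1 : Fin 3) = Fin.castSucc 1 from rfl]
    simp only [map_sub, map_pow, map_mul, finSuccEquivLast_X_last, finSuccEquivLast_X_castSucc]
  rw [← neg_sub, Ideal.span_singleton_neg, hsplit, ← RingHom.comap_ker, hker]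
  ext p
  rw [Ideal.mem_comap, Ideal.mem_span_singleton, Ideal.mem_span_singleton, ← hgenerator]
  exact map_dvd_iff _

/-- Let `R ⊆ S` be integral domains (`S` a commutative `R`-algebra with injective structure
map), `n ≥ 1`, let `a, b ∈ S` be algebraically independent over `R`, and let `c ∈ S` satisfy
`c^n = a·b`.  Then the kernel of the `R`-algebra homomorphism `R[U,V,Z] → S` determined by
`U ↦ a, V ↦ b, Z ↦ c` is exactly the principal ideal generated by `UV − Z^n`. -/
theorem ker_aeval_eq_span_UV_sub_Zn (R S : Type) [CommRing R] [IsDomain R]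
    [CommRing S] [IsDomain S] [Algebra R S]
    (hinj : Function.Injective (algebraMap R S))
    (n : ℕ) (hn : 1 ≤ n) (a b c : S)
    (hab : AlgebraicIndependent R ![a, b]) (hc : c ^ n = a * b) :
    RingHom.ker (MvPolynomial.aeval (R := R) ![a, b, c]).toRingHom =
      Ideal.span {(X 0 * X 1 - X 2 ^ n : MvPolynomial (Fin 3) R)} :=
  ker_aeval_eq_span_UV_sub_Zn_general R S n hn a b c hab hc
end

section
/- With d = deg π and ψ_d := −U·(∂φ_d/∂U) ∈ A[U,V], for every polynomial P ∈ 𝔽_𝔭[U,V]: if φ̄_d does not divide P, then φ̄_d does not divide U·V·ψ̄_d·P in 𝔽_𝔭[U,V]. -/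
/-!
Over `𝔽_𝔭` write `t` for the image of `T`; then `φ̄_d` obeys the recursion of `φ_d` with `T`
replaced by `t`. As `q = 0` in `𝔽_𝔭`, the factors `(U − t^q V)^{q^{d−1}}` and `(U^q V)^{q^{d−2}}`
are constants for `∂/∂U`, so the Wronskian `W_d = φ̄_{d+1}' φ̄_d − φ̄_d' φ̄_{d+1}` satisfies
`W_0 = 1` and `W_{d+1} = −(t^{q^{d+1}} − t) (U^q V)^{q^d} W_d`. For `0 < k < deg π` we have
`t^{q^k} ≠ t`, since otherwise `π ∣ T^{q^k} − T` and `deg π ∣ k`; hence `W_{d−1}` is a unit times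
a monomial. A common factor of `φ̄_d` and `ψ̄_d = −U φ̄_d'` therefore divides `U` or `V`, but
neither divides `φ̄_d`, as one sees by setting `U = 0` (using `t ≠ 0`, i.e. `π ≠ T`) or `V = 0`.
So `φ̄_d` is coprime to `U V ψ̄_d`.
-/

open MvPolynomial

/-- The isobaric polynomial `ψ_d := −U·(∂φ_d/∂U) ∈ A[U,V]`, the unique isobaric polynomial
with `∂(g_d) = ψ_d(Δ_W, Δ_T)·E_T`. -/
noncomputable def psiPoly (Fq : Type) [Field Fq] (q : ℕ) (d : ℕ) :
    MvPolynomial (Fin 2) (Polynomial Fq) :=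
  - (X 0) * MvPolynomial.pderiv 0 (phiPoly Fq q d)

noncomputable def phiBar (F : Type*) [CommRing F] (q : ℕ) (t : F) : ℕ → MvPolynomial (Fin 2) F
  | 0 => 1
  | 1 => X 0 - C (t ^ q) * X 1
  | (d + 2) =>
      phiBar F q t (d + 1) * (X 0 - C (t ^ q) * X 1) ^ q ^ (d + 1) +
        C (t ^ (q ^ (d + 1)) - t) * phiBar F q t d * (X 0 ^ q * X 1) ^ q ^ d

theorem map_phiPoly {Fq : Type} [Field Fq] {F : Type*} [CommRing F] (q : ℕ)
    (f : Polynomial Fq →+* F) : ∀ d, map f (phiPoly Fq q d) = phiBar F q (f Polynomial.X) d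
  | 0 => by simp [phiPoly, phiBar]
  | 1 => by simp [phiPoly, phiBar]
  | d + 2 => by
    simp only [phiPoly, phiBar, map_add, map_mul, map_sub, map_pow, map_X, map_C,
      map_phiPoly q f (d + 1), map_phiPoly q f d]

theorem not_X_dvd_of_eval_ne_zero {R σ : Type*} [CommRing R] {x : σ → R} {i : σ} (hi : x i = 0)
    {f : MvPolynomial σ R} (hf : eval x f ≠ 0) : ¬ X i ∣ f := fun h =>
  hf (zero_dvd_iff.mp (by simpa [hi] using map_dvd (eval x) h))

noncomputable def phiWronskian (F : Type*) [CommRing F] (q : ℕ) (t : F) (d : ℕ) :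
    MvPolynomial (Fin 2) F :=
  pderiv 0 (phiBar F q t (d + 1)) * phiBar F q t d -
    pderiv 0 (phiBar F q t d) * phiBar F q t (d + 1)

section CommRing

variable {F : Type*} [CommRing F] {q : ℕ} {t : F}

theorem pderiv_pow_eq_zero {σ : Type*} (hq : (q : F) = 0) (i : σ) (f : MvPolynomial σ F) :
    pderiv i (f ^ q) = 0 := by
  rw [pderiv_pow, ← C_eq_coe_nat, hq, map_zero, zero_mul, zero_mul]

theorem pderiv_phiBar_add_two (hq : (q : F) = 0) (d : ℕ) :
    pderiv 0 (phiBar F q t (d + 2)) =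
      pderiv 0 (phiBar F q t (d + 1)) * (X 0 - C (t ^ q) * X 1) ^ q ^ (d + 1) +
        C (t ^ (q ^ (d + 1)) - t) * pderiv 0 (phiBar F q t d) * (X 0 ^ q * X 1) ^ q ^ d := by
  have hlinear :
      pderiv 0 ((X 0 - C (t ^ q) * X 1 : MvPolynomial (Fin 2) F) ^ q ^ (d + 1)) = 0 := by
    rw [pow_succ, pow_mul, pderiv_pow_eq_zero hq]
  have hmonomial : pderiv 0 ((X 0 ^ q * X 1 : MvPolynomial (Fin 2) F) ^ q ^ d) = 0 := by
    rw [pderiv_pow, pderiv_mul, pderiv_pow_eq_zero hq,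
      pderiv_X_of_ne (by decide : (1 : Fin 2) ≠ 0)]
    simp
  rw [phiBar, map_add, pderiv_mul, hlinear, pderiv_mul, pderiv_C_mul, hmonomial]
  ring

theorem phiWronskian_zero : phiWronskian F q t 0 = 1 := by
  simp [phiWronskian, phiBar, pderiv_X_of_ne (by decide : (1 : Fin 2) ≠ 0)]

theorem phiWronskian_succ (hq : (q : F) = 0) (d : ℕ) :
    phiWronskian F q t (d + 1) =
      -(C (t ^ (q ^ (d + 1)) - t) * (X 0 ^ q * X 1) ^ q ^ d) * phiWronskian F q t d := by
  rw [phiWronskian, phiWronskian, pderiv_phiBar_add_two hq, phiBar]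
  ring

theorem eval_phiBar_ne_zero [IsDomain F] (hq : q ≠ 0) {x : Fin 2 → F} (hx : x 0 = 0 ∨ x 1 = 0)
    (hx₁ : x 0 - t ^ q * x 1 ≠ 0) : ∀ d, eval x (phiBar F q t d) ≠ 0
  | 0 => by simp [phiBar]
  | 1 => by simpa [phiBar] using hx₁
  | d + 2 => by
    have hmonomial : (x 0 ^ q * x 1) ^ q ^ d = 0 := by
      rcases hx with h | h <;> simp [h, hq]
    simp only [phiBar, map_add, map_mul, map_pow, map_sub, eval_X, eval_C, hmonomial, mul_zero,
      add_zero]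
    exact mul_ne_zero (eval_phiBar_ne_zero hq hx hx₁ (d + 1)) (pow_ne_zero _ hx₁)

end CommRing

section Field

variable {F : Type*} [Field F] {q : ℕ} {t : F}

theorem isRelPrime_phiBar_X_zero (hq : q ≠ 0) (ht : t ≠ 0) (d : ℕ) :
    IsRelPrime (phiBar F q t d) (X 0) :=
  (X_prime.irreducible.isRelPrime_iff_not_dvd.mpr <|
    not_X_dvd_of_eval_ne_zero (x := ![0, 1]) rfl <|
      eval_phiBar_ne_zero hq (Or.inl rfl) (by simp [ht]) d).symm

theorem isRelPrime_phiBar_X_one (hq : q ≠ 0) (d : ℕ) :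
    IsRelPrime (phiBar F q t d) (X 1) :=
  (X_prime.irreducible.isRelPrime_iff_not_dvd.mpr <|
    not_X_dvd_of_eval_ne_zero (x := ![1, 0]) rfl <|
      eval_phiBar_ne_zero hq (Or.inr rfl) (by simp) d).symm

theorem isRelPrime_phiWronskian {f : MvPolynomial (Fin 2) F} (h₀ : IsRelPrime f (X 0))
    (h₁ : IsRelPrime f (X 1)) (hq : (q : F) = 0) {d : ℕ}
    (htq : ∀ k, 0 < k → k ≤ d → t ^ q ^ k ≠ t) : IsRelPrime f (phiWronskian F q t d) := by
  induction d with
  | zero => simpa [phiWronskian_zero] using isRelPrime_one_right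
  | succ d ih =>
    have hunit : IsUnit (C (t ^ q ^ (d + 1) - t) : MvPolynomial (Fin 2) F) :=
      (sub_ne_zero.mpr (htq (d + 1) d.succ_pos le_rfl)).isUnit.map C
    have hmonomial : IsRelPrime f ((X 0 ^ q * X 1) ^ q ^ d) := (h₀.pow_right.mul_right h₁).pow_right
    rw [phiWronskian_succ hq]
    exact (hunit.isRelPrime_right.mul_right hmonomial).neg_right.mul_right
      (ih fun k hk hkd => htq k hk (hkd.trans d.le_succ))

theorem isRelPrime_phiBar_pderiv (hq : q ≠ 0) (hqF : (q : F) = 0) (ht : t ≠ 0) {d : ℕ}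
    (htq : ∀ k, 0 < k → k ≤ d → t ^ q ^ k ≠ t) :
    IsRelPrime (phiBar F q t (d + 1)) (pderiv 0 (phiBar F q t (d + 1))) := fun _ hΦ hΦ' =>
  isRelPrime_phiWronskian (isRelPrime_phiBar_X_zero hq ht _) (isRelPrime_phiBar_X_one hq _) hqF
    htq hΦ (dvd_sub (dvd_mul_of_dvd_left hΦ' _) (dvd_mul_of_dvd_right hΦ _))

theorem isRelPrime_phiBar_X_mul_X_mul_pderiv (hq : q ≠ 0) (hqF : (q : F) = 0) (ht : t ≠ 0)
    {d : ℕ} (htq : ∀ k, 0 < k → k ≤ d → t ^ q ^ k ≠ t) :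
    IsRelPrime (phiBar F q t (d + 1))
      (X 0 * X 1 * (-X 0 * pderiv 0 (phiBar F q t (d + 1)))) :=
  have h₀ := isRelPrime_phiBar_X_zero hq ht (d + 1)
  (h₀.mul_right (isRelPrime_phiBar_X_one hq _)).mul_right
    (h₀.neg_right.mul_right (isRelPrime_phiBar_pderiv hq hqF ht htq))

end Field

section Quotient

variable {K : Type*} [Field K] {π : Polynomial K}

theorem quotient_mk_X_ne_zero (hmonic : π.Monic) (hirr : Irreducible π) (hne : π ≠ Polynomial.X) :
    Ideal.Quotient.mk (Ideal.span {π}) Polynomial.X ≠ 0 := by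
  rw [Ne, Ideal.Quotient.eq_zero_iff_mem, Ideal.mem_span_singleton]
  exact fun h => hne (Polynomial.eq_of_monic_of_associated hmonic Polynomial.monic_X
    (hirr.associated_of_dvd Polynomial.irreducible_X h))

theorem quotient_mk_X_pow_card_pow_ne (hirr : Irreducible π) {k : ℕ} (hk : 0 < k)
    (hkπ : k < π.natDegree) :
    Ideal.Quotient.mk (Ideal.span {π}) Polynomial.X ^ Nat.card K ^ k ≠
      Ideal.Quotient.mk (Ideal.span {π}) Polynomial.X := by
  rw [Ne, ← map_pow, Ideal.Quotient.eq, Ideal.mem_span_singleton]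
  exact fun h => Nat.not_dvd_of_pos_of_lt hk hkπ (hirr.natDegree_dvd_of_dvd_X_pow_card_pow_sub_X h)

end Quotient

theorem phiPoly_not_dvd_mul_general (q : ℕ)
    (Fq : Type) [Field Fq] [Fintype Fq] (hcard : Fintype.card Fq = q)
    (π : Polynomial Fq) (hmonic : π.Monic) (hirr : Irreducible π)
    (hne : π ≠ Polynomial.X)
    (P : MvPolynomial (Fin 2) (Polynomial Fq ⧸ Ideal.span {π}))
    (hndvd : ¬ MvPolynomial.map (Ideal.Quotient.mk (Ideal.span {π}))
        (phiPoly Fq q π.natDegree) ∣ P) :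
    ¬ MvPolynomial.map (Ideal.Quotient.mk (Ideal.span {π})) (phiPoly Fq q π.natDegree)
        ∣ X 0 * X 1 *
            MvPolynomial.map (Ideal.Quotient.mk (Ideal.span {π})) (psiPoly Fq q π.natDegree)
            * P := by
  have : (Ideal.span {π}).IsMaximal := PrincipalIdealRing.isMaximal_of_irreducible hirr
  let _ := Ideal.Quotient.field (Ideal.span {π})
  obtain ⟨d, hd⟩ := Nat.exists_eq_add_one.mpr hirr.natDegree_pos
  have hq : q ≠ 0 := hcard ▸ Fintype.card_ne_zero
  have hqF : (q : Polynomial Fq ⧸ Ideal.span {π}) = 0 := by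
    rw [← hcard, ← map_natCast (algebraMap Fq _), FiniteField.cast_card_eq_zero, map_zero]
  have htq : ∀ k, 0 < k → k ≤ d → Ideal.Quotient.mk (Ideal.span {π}) Polynomial.X ^ q ^ k ≠
      Ideal.Quotient.mk (Ideal.span {π}) Polynomial.X := fun k hk hkd => by
    rw [← hcard, ← Nat.card_eq_fintype_card]
    exact quotient_mk_X_pow_card_pow_ne hirr hk (by omega)
  rw [map_phiPoly, hd] at hndvd
  rw [psiPoly, map_mul, map_neg, map_X, ← pderiv_map, map_phiPoly, hd]
  exact fun h => hndvd <| (isRelPrime_phiBar_X_mul_X_mul_pderiv hq hqF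
    (quotient_mk_X_ne_zero hmonic hirr hne) htq).dvd_of_dvd_mul_left h

/-- With `d = deg π` and `ψ_d := −U·(∂φ_d/∂U)`, for every `P ∈ 𝔽_𝔭[U,V]`: if `φ̄_d` does not
divide `P`, then `φ̄_d` does not divide `U·V·ψ̄_d·P`. -/
theorem phiPoly_not_dvd_mul (p r q : ℕ) (hp : p.Prime) (hodd : Odd p)
    (hr : 0 < r) (hq : q = p ^ r)
    (Fq : Type) [Field Fq] [Fintype Fq] (hcard : Fintype.card Fq = q)
    (π : Polynomial Fq) (hmonic : π.Monic) (hirr : Irreducible π)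
    (hne : π ≠ Polynomial.X)
    (P : MvPolynomial (Fin 2) (Polynomial Fq ⧸ Ideal.span {π}))
    (hndvd : ¬ MvPolynomial.map (Ideal.Quotient.mk (Ideal.span {π}))
        (phiPoly Fq q π.natDegree) ∣ P) :
    ¬ MvPolynomial.map (Ideal.Quotient.mk (Ideal.span {π})) (phiPoly Fq q π.natDegree)
        ∣ X 0 * X 1 *
            MvPolynomial.map (Ideal.Quotient.mk (Ideal.span {π})) (psiPoly Fq q π.natDegree)
            * P :=
  phiPoly_not_dvd_mul_general q Fq hcard π hmonic hirr hne P hndvd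
end
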